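/- arXiv:2405.05934 — 8 statements merged into one kernel-verified Lean document; each statement's English description precedes it below -/
import Mathlib

section
/- Fix p ∈ ℕ, group means μ^{(y,d)} ∈ ℝ^p for (y,d) ∈ {0,1} × {S,T} satisfying the mean-structure assumption μ^{(1,S)} − μ^{(0,S)} = μ^{(1,T)} − μ^{(0,T)}; set Δ_D := μ^{(1,S)} − μ^{(0,S)} and Δ_C := μ^{(0,S)} − μ^{(0,T)}. Let Σ ∈ ℝ^{p×p} be symmetric positive definite and for each group let ν^{(y,d)} be a Borel probability measure on ℝ^p with mean μ^{(y,d)} and covariance matrix Σ. Then the downsampled/upweighted risk R(w,b) := (1/4) Σ_{(y,d)} ∫ (y − ⟨w,x⟩ − b)² dν^{(y,d)}(x) has the unique minimizer w* = (1/4)(Σ + (1/4)Δ_C Δ_Cᵀ + (1/4)Δ_D Δ_Dᵀ)⁻¹ Δ_D and b* = 1/2 − (1/2)⟨w*, μ^{(0,T)} + μ^{(1,S)}⟩. -/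
/-!
Each group term splits into variance and squared bias:
`∫ (y - ⟨w, x⟩ - b)² dν = wᵀ Σ w + (y - ⟨w, μ⟩ - b)²`.
Since the four means form a parallelogram, the average of the four bias terms is
`¼ ⟨w, Δ_C⟩² + ¼ (1 - ⟨w, Δ_D⟩)² + u(w, b)²` with `u(w, b) = b - ½ + ½ ⟨w, μ^{(0,T)} + μ^{(1,S)}⟩`.
So `R(w, b) = wᵀ A w - ½ ⟨w, Δ_D⟩ + ¼ + u(w, b)²` with `A = Σ + ¼ Δ_C Δ_Cᵀ + ¼ Δ_D Δ_Dᵀ`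
positive definite, and completing the square around `w* = ¼ A⁻¹ Δ_D` gives
`R(w, b) = R(w*, b*) + (w - w*)ᵀ A (w - w*) + u(w, b)²`, where `u(w*, b) = b - b*`.
-/

open MeasureTheory ProbabilityTheory Matrix

lemma integral_const_sub_sq {Ω : Type*} {mΩ : MeasurableSpace Ω} {μ : Measure Ω}
    [IsProbabilityMeasure μ] {X : Ω → ℝ} (hX : MemLp X 2 μ) (a : ℝ) :
    ∫ ω, (a - X ω) ^ 2 ∂μ = Var[X; μ] + (a - μ[X]) ^ 2 := by
  have hZ : MemLp (fun ω => a - X ω) 2 μ := (memLp_const a).sub hX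
  rw [← variance_const_sub hX.1 a, variance_eq_sub hZ,
    integral_sub (integrable_const a) (hX.integrable one_le_two)]
  simp

section MeanCovariance

variable {ι : Type*} [Fintype ι] {ν : Measure (ι → ℝ)}

lemma memLp_two_apply (hν : Integrable (fun x => ‖x‖ ^ 2) ν) (i : ι) :
    MemLp (fun x : ι → ℝ => x i) 2 ν :=
  ((memLp_two_iff_integrable_sq_norm aestronglyMeasurable_id).2 hν).eval i

lemma integral_dotProduct [IsFiniteMeasure ν] (hν : Integrable (fun x => ‖x‖ ^ 2) ν)
    {m : ι → ℝ} (hmean : ∀ i, ∫ x, x i ∂ν = m i) (w : ι → ℝ) :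
    ∫ x, w ⬝ᵥ x ∂ν = w ⬝ᵥ m := by
  simp only [dotProduct]
  rw [integral_finsetSum _ fun i _ => ((memLp_two_apply hν i).integrable one_le_two).const_mul _]
  simp [integral_const_mul, hmean]

lemma variance_dotProduct [IsFiniteMeasure ν] (hν : Integrable (fun x => ‖x‖ ^ 2) ν)
    {m : ι → ℝ} {S : Matrix ι ι ℝ} (hmean : ∀ i, ∫ x, x i ∂ν = m i)
    (hcov : ∀ i j, ∫ x, (x i - m i) * (x j - m j) ∂ν = S i j) (w : ι → ℝ) :
    Var[fun x => w ⬝ᵥ x; ν] = w ⬝ᵥ S *ᵥ w := by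
  simp only [dotProduct]
  rw [variance_fun_sum fun i => (memLp_two_apply hν i).const_mul (w i)]
  simp only [covariance_const_mul_left, covariance_const_mul_right, mulVec, dotProduct,
    Finset.mul_sum]
  refine Finset.sum_congr rfl fun i _ => Finset.sum_congr rfl fun j _ => ?_
  rw [covariance, hmean, hmean, hcov]
  ring

lemma integral_sq_sub_dotProduct_sub [IsProbabilityMeasure ν]
    (hν : Integrable (fun x => ‖x‖ ^ 2) ν) {m : ι → ℝ} {S : Matrix ι ι ℝ} (hmean : ∀ i, ∫ x, x i ∂ν = m i)
    (hcov : ∀ i j, ∫ x, (x i - m i) * (x j - m j) ∂ν = S i j) (w : ι → ℝ) (y b : ℝ) :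
    ∫ x, (y - w ⬝ᵥ x - b) ^ 2 ∂ν = w ⬝ᵥ S *ᵥ w + (y - w ⬝ᵥ m - b) ^ 2 := by
  have hw : MemLp (fun x : ι → ℝ => w ⬝ᵥ x) 2 ν := by
    simp only [dotProduct]
    exact memLp_finsetSum _ fun i _ => (memLp_two_apply hν i).const_mul (w i)
  simp_rw [sub_right_comm y _ b]
  rw [integral_const_sub_sq hw, variance_dotProduct hν hmean hcov,
    integral_dotProduct hν hmean]

end MeanCovariance

section QuadraticForms

variable {n : Type*} [Fintype n]

lemma dotProduct_vecMulVec_mulVec {R : Type*} [CommSemiring R] (u a b v : n → R) :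
    u ⬝ᵥ vecMulVec a b *ᵥ v = (u ⬝ᵥ a) * (b ⬝ᵥ v) := by
  simp [vecMulVec_mulVec, dotProduct_smul, mul_comm]

lemma Matrix.IsSymm.dotProduct_sub_mulVec_sub {R : Type*} [CommRing R] {A : Matrix n n R}
    (hA : A.IsSymm) (w v : n → R) :
    (w - v) ⬝ᵥ A *ᵥ (w - v) = w ⬝ᵥ A *ᵥ w - 2 * (w ⬝ᵥ A *ᵥ v) + v ⬝ᵥ A *ᵥ v := by
  have hvw : v ⬝ᵥ A *ᵥ w = w ⬝ᵥ A *ᵥ v := by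
    rw [dotProduct_mulVec, ← mulVec_transpose, hA.eq, dotProduct_comm]
  simp only [mulVec_sub, dotProduct_sub, sub_dotProduct, hvw]
  ring

lemma Matrix.PosDef.add_smul_vecMulVec_self {S : Matrix n n ℝ} (hS : S.PosDef) {c : ℝ}
    (hc : 0 ≤ c) (a : n → ℝ) : (S + c • vecMulVec a a).PosDef := by
  have ha : (vecMulVec a a).PosSemidef := by
    simpa using posSemidef_vecMulVec_self_star a
  exact hS.add_posSemidef (ha.smul hc)

lemma Matrix.PosDef.isUniqueMin_of_eq_quadratic_add_sq {A : Matrix n n ℝ} (hA : A.PosDef)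
    {f : (n → ℝ) → ℝ → ℝ} {u : (n → ℝ) → ℝ → ℝ} {w₀ : n → ℝ} {b₀ C : ℝ}
    (hf : ∀ w b, f w b = (w - w₀) ⬝ᵥ A *ᵥ (w - w₀) + u w b ^ 2 + C)
    (hu : ∀ b, u w₀ b = b - b₀) :
    (∀ w b, f w₀ b₀ ≤ f w b) ∧ (∀ w b, f w b = f w₀ b₀ → w = w₀ ∧ b = b₀) := by
  have hmin : f w₀ b₀ = C := by simp [hf, hu]
  have hQ (w : n → ℝ) : 0 ≤ (w - w₀) ⬝ᵥ A *ᵥ (w - w₀) := by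
    simpa using hA.posSemidef.dotProduct_mulVec_nonneg (w - w₀)
  refine ⟨fun w b => ?_, fun w b h => ?_⟩
  · rw [hmin, hf]
    nlinarith [hQ w, sq_nonneg (u w b)]
  · rw [hmin, hf] at h
    have hw : w = w₀ := by
      by_contra hne
      have := hA.dotProduct_mulVec_pos (sub_ne_zero.2 hne)
      simp only [star_trivial] at this
      nlinarith [sq_nonneg (u w b)]
    subst hw
    refine ⟨rfl, ?_⟩
    simp only [sub_self, zero_dotProduct, hu] at h
    nlinarith [sq_nonneg (b - b₀)]

end QuadraticForms

lemma quarter_sum_sq_residuals_of_parallelogram {n : Type*} [Fintype n] {m0S m0T m1S m1T : n → ℝ}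
    (hpar : m1S - m0S = m1T - m0T) (w : n → ℝ) (b : ℝ) :
    (1/4 : ℝ) * ((0 - w ⬝ᵥ m0S - b) ^ 2 + (0 - w ⬝ᵥ m0T - b) ^ 2
      + (1 - w ⬝ᵥ m1S - b) ^ 2 + (1 - w ⬝ᵥ m1T - b) ^ 2)
    = (1/4 : ℝ) * (w ⬝ᵥ (m0S - m0T)) ^ 2 + (1/4 : ℝ) * (1 - w ⬝ᵥ (m1S - m0S)) ^ 2
      + (b - 1/2 + (1/2 : ℝ) * (w ⬝ᵥ (m0T + m1S))) ^ 2 := by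
  obtain rfl : m1T = m1S - m0S + m0T := by rw [hpar]; abel
  simp only [dotProduct_add, dotProduct_sub]
  ring

/-- Proposition 1: the downsampled/upweighted risk
`R(w,b) = (1/4)·Σ_{(y,d)} ∫ (y − ⟨w,x⟩ − b)² dν^{(y,d)}` over group-conditional laws with
means `μ^{(y,d)}` (forming a parallelogram) and common covariance `Σ` (positive definite)
has the unique minimizer `w* = (1/4)(Σ + (1/4)Δ_CΔ_Cᵀ + (1/4)Δ_DΔ_Dᵀ)⁻¹Δ_D`,
`b* = 1/2 − (1/2)⟨w*, μ^{(0,T)} + μ^{(1,S)}⟩`. -/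
theorem ds_uw_optimal_model
    (p : ℕ) (μ0S μ0T μ1S μ1T : Fin p → ℝ)
    (hmean : μ1S - μ0S = μ1T - μ0T)
    (ΔD ΔC : Fin p → ℝ)
    (hΔD : ΔD = μ1S - μ0S) (hΔC : ΔC = μ0S - μ0T)
    (S : Matrix (Fin p) (Fin p) ℝ) (hS : S.PosDef)
    (ν0S ν0T ν1S ν1T : Measure (Fin p → ℝ))
    [IsProbabilityMeasure ν0S] [IsProbabilityMeasure ν0T]
    [IsProbabilityMeasure ν1S] [IsProbabilityMeasure ν1T]
    (hint : ∀ ν ∈ [ν0S, ν0T, ν1S, ν1T], Integrable (fun x => ‖x‖ ^ 2) ν)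
    (hmeans : (∀ i, (∫ x, x i ∂ν0S) = μ0S i) ∧ (∀ i, (∫ x, x i ∂ν0T) = μ0T i) ∧
              (∀ i, (∫ x, x i ∂ν1S) = μ1S i) ∧ (∀ i, (∫ x, x i ∂ν1T) = μ1T i))
    (hcovs : (∀ i j, (∫ x, (x i - μ0S i) * (x j - μ0S j) ∂ν0S) = S i j) ∧
             (∀ i j, (∫ x, (x i - μ0T i) * (x j - μ0T j) ∂ν0T) = S i j) ∧
             (∀ i j, (∫ x, (x i - μ1S i) * (x j - μ1S j) ∂ν1S) = S i j) ∧
             (∀ i j, (∫ x, (x i - μ1T i) * (x j - μ1T j) ∂ν1T) = S i j))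
    (R : (Fin p → ℝ) → ℝ → ℝ)
    (hR : ∀ w b, R w b = (1/4 : ℝ) *
      ((∫ x, ((0 : ℝ) - w ⬝ᵥ x - b) ^ 2 ∂ν0S) + (∫ x, ((0 : ℝ) - w ⬝ᵥ x - b) ^ 2 ∂ν0T)
        + (∫ x, ((1 : ℝ) - w ⬝ᵥ x - b) ^ 2 ∂ν1S) + (∫ x, ((1 : ℝ) - w ⬝ᵥ x - b) ^ 2 ∂ν1T)))
    (wstar : Fin p → ℝ)
    (hwstar : wstar = (1/4 : ℝ) •
      ((S + (1/4 : ℝ) • vecMulVec ΔC ΔC + (1/4 : ℝ) • vecMulVec ΔD ΔD)⁻¹ *ᵥ ΔD))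
    (bstar : ℝ) (hbstar : bstar = 1/2 - (1/2 : ℝ) * (wstar ⬝ᵥ (μ0T + μ1S))) :
    (∀ w b, R wstar bstar ≤ R w b) ∧
    (∀ w b, R w b = R wstar bstar → w = wstar ∧ b = bstar) := by
  obtain ⟨hm0S, hm0T, hm1S, hm1T⟩ := hmeans
  obtain ⟨hc0S, hc0T, hc1S, hc1T⟩ := hcovs
  set A := S + (1/4 : ℝ) • vecMulVec ΔC ΔC + (1/4 : ℝ) • vecMulVec ΔD ΔD with hA
  have hApos : A.PosDef :=
    (hS.add_smul_vecMulVec_self (by norm_num) ΔC).add_smul_vecMulVec_self (by norm_num) ΔD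
  have hAw : A *ᵥ wstar = (1/4 : ℝ) • ΔD := by
    have hdet : IsUnit A.det := (isUnit_iff_isUnit_det A).1 hApos.isUnit
    rw [hwstar, mulVec_smul, mulVec_mulVec, mul_nonsing_inv A hdet, one_mulVec]
  refine hApos.isUniqueMin_of_eq_quadratic_add_sq (C := 1/4 - wstar ⬝ᵥ A *ᵥ wstar)
    (u := fun w b => b - 1/2 + (1/2 : ℝ) * (w ⬝ᵥ (μ0T + μ1S))) (fun w b => ?_)
    (fun b => by rw [hbstar]; ring)
  rw [hR, integral_sq_sub_dotProduct_sub (hint ν0S (by simp)) hm0S hc0S,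
    integral_sq_sub_dotProduct_sub (hint ν0T (by simp)) hm0T hc0T,
    integral_sq_sub_dotProduct_sub (hint ν1S (by simp)) hm1S hc1S,
    integral_sq_sub_dotProduct_sub (hint ν1T (by simp)) hm1T hc1T,
    (isHermitian_iff_isSymm.1 hApos.isHermitian).dotProduct_sub_mulVec_sub, hAw]
  have hquad : w ⬝ᵥ A *ᵥ w
      = w ⬝ᵥ S *ᵥ w + (1/4 : ℝ) * (w ⬝ᵥ ΔC) ^ 2 + (1/4 : ℝ) * (w ⬝ᵥ ΔD) ^ 2 := by
    simp only [hA, add_mulVec, smul_mulVec, dotProduct_add, dotProduct_smul,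
      dotProduct_vecMulVec_mulVec, smul_eq_mul, dotProduct_comm ΔC, dotProduct_comm ΔD]
    ring
  have hmeanpart := quarter_sum_sq_residuals_of_parallelogram hmean w b
  rw [← hΔC, ← hΔD] at hmeanpart
  rw [hquad, dotProduct_smul, smul_eq_mul]
  linear_combination hmeanpart
end

section
/- Fix p ∈ ℕ, group means μ^{(y,d)} ∈ ℝ^p for (y,d) ∈ {0,1} × {S,T} satisfying μ^{(1,S)} − μ^{(0,S)} = μ^{(1,T)} − μ^{(0,T)}, with Δ_D := μ^{(1,S)} − μ^{(0,S)}, Δ_C := μ^{(0,S)} − μ^{(0,T)}, and let Σ ∈ ℝ^{p×p} be symmetric positive definite. Let w ∈ ℝ^p with w ≠ 0 and b := 1/2 − (1/2)⟨w, μ^{(0,T)} + μ^{(1,S)}⟩. Then the per-group Gaussian errors satisfy E^{(0,T)}(w,b) = E^{(1,S)}(w,b) = Φ(−(1/2)⟨w, Δ_C + Δ_D⟩ / √(wᵀΣw)) and E^{(0,S)}(w,b) = E^{(1,T)}(w,b) = Φ((1/2)⟨w, Δ_C − Δ_D⟩ / √(wᵀΣw)), and hence WGE(w,b) = max{Φ(−(1/2)⟨w,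 Δ_C + Δ_D⟩ / √(wᵀΣw)), Φ((1/2)⟨w, Δ_C − Δ_D⟩ / √(wᵀΣw))}. -/
/-!
Standardising, each group error is `Φ(±(⟨w,μ^{(y,d)}⟩ + b − 1/2) / √(wᵀΣw))`. With the midpoint
intercept the four signed margins are `∓(1/2)⟨w, Δ_C + Δ_D⟩` for `(0,T)`, `(1,S)` and
`±(1/2)⟨w, Δ_C − Δ_D⟩` for `(0,S)`, `(1,T)`, the last one because the class shift `Δ_D` is the
same in both domains; `Σ ≻ 0` and `w ≠ 0` make the variance positive.
-/

open MeasureTheory ProbabilityTheory Matrix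

namespace ProbabilityTheory

variable {v : NNReal}

lemma gaussianReal_map_standardize (m : ℝ) (hv : v ≠ 0) :
    (gaussianReal m v).map (fun x ↦ (x - m) / √v) = gaussianReal 0 1 := by
  have hv' : (0 : ℝ) < v := by positivity
  have h : (fun x ↦ (x - m) / √v) = (· / √(v : ℝ)) ∘ (· - m) := rfl
  rw [h, ← Measure.map_map (by fun_prop) (by fun_prop), gaussianReal_map_sub_const,
    gaussianReal_map_div_const, sub_self, zero_div]
  congr 1
  ext
  simp [Real.sq_sqrt hv'.le, hv'.ne']

lemma gaussianReal_Iic (m t : ℝ) (hv : v ≠ 0) :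
    gaussianReal m v (Set.Iic t) = gaussianReal 0 1 (Set.Iic ((t - m) / √v)) := by
  have hsqrt : (0 : ℝ) < √v := Real.sqrt_pos.mpr (by positivity)
  rw [← gaussianReal_map_standardize m hv, Measure.map_apply (by fun_prop) measurableSet_Iic]
  congr 1
  ext x
  simp [div_le_div_iff_of_pos_right hsqrt]

lemma gaussianReal_Ioi (m t : ℝ) (hv : v ≠ 0) :
    gaussianReal m v (Set.Ioi t) = gaussianReal 0 1 (Set.Iic ((m - t) / √v)) := by
  have := nullSingletonClass_gaussianReal (μ := -m) hv
  calc gaussianReal m v (Set.Ioi t)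
      = gaussianReal (-m) v (Set.Iio (-t)) := by
        rw [← gaussianReal_map_neg, Measure.map_apply (by fun_prop) measurableSet_Iio]
        congr 1
        ext x
        simp
    _ = gaussianReal (-m) v (Set.Iic (-t)) := measure_congr Iio_ae_eq_Iic
    _ = gaussianReal 0 1 (Set.Iic ((m - t) / √v)) := by
        rw [gaussianReal_Iic _ _ hv, neg_sub_neg]

end ProbabilityTheory

/-- per-group Gaussian errors for a linear model with the "midpoint" intercept.
Under the Gaussian group model `X | (y,d) ~ N(μ^{(y,d)}, Σ)` the statistic `⟨w,X⟩ + b` has law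
`gaussianReal(⟨w,μ^{(y,d)}⟩ + b, wᵀΣw)`; with the per-group errors defined accordingly (class 0
errs when the statistic exceeds 1/2, class 1 errs when it is ≤ 1/2), and
`b = 1/2 − (1/2)⟨w, μ^{(0,T)} + μ^{(1,S)}⟩`, the errors pair up as
`Φ(−(1/2)⟨w, Δ_C + Δ_D⟩/√(wᵀΣw))` and `Φ((1/2)⟨w, Δ_C − Δ_D⟩/√(wᵀΣw))`, and the worst-group
error is their maximum. Here `Φ t = gaussianReal 0 1 {z | z ≤ t}` is the standard normal CDF. -/
theorem per_group_errors_and_wge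
    (p : ℕ) (μ0S μ0T μ1S μ1T : Fin p → ℝ)
    (hmean : μ1S - μ0S = μ1T - μ0T)
    (ΔD ΔC : Fin p → ℝ)
    (hΔD : ΔD = μ1S - μ0S) (hΔC : ΔC = μ0S - μ0T)
    (S : Matrix (Fin p) (Fin p) ℝ) (hS : S.PosDef)
    (w : Fin p → ℝ) (hw : w ≠ 0)
    (b : ℝ) (hb : b = 1/2 - (1/2 : ℝ) * (w ⬝ᵥ (μ0T + μ1S)))
    (Φ : ℝ → ENNReal) (hΦ : ∀ t, Φ t = gaussianReal 0 1 {z | z ≤ t})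
    (E0S E0T E1S E1T WGE : ENNReal)
    (hE0S : E0S = gaussianReal (w ⬝ᵥ μ0S + b) (w ⬝ᵥ (S *ᵥ w)).toNNReal {z | 1/2 < z})
    (hE0T : E0T = gaussianReal (w ⬝ᵥ μ0T + b) (w ⬝ᵥ (S *ᵥ w)).toNNReal {z | 1/2 < z})
    (hE1S : E1S = gaussianReal (w ⬝ᵥ μ1S + b) (w ⬝ᵥ (S *ᵥ w)).toNNReal {z | z ≤ 1/2})
    (hE1T : E1T = gaussianReal (w ⬝ᵥ μ1T + b) (w ⬝ᵥ (S *ᵥ w)).toNNReal {z | z ≤ 1/2})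
    (hWGE : WGE = max (max E0S E0T) (max E1S E1T)) :
    E0T = Φ (-(1/2 : ℝ) * (w ⬝ᵥ (ΔC + ΔD)) / Real.sqrt (w ⬝ᵥ (S *ᵥ w))) ∧
    E1S = Φ (-(1/2 : ℝ) * (w ⬝ᵥ (ΔC + ΔD)) / Real.sqrt (w ⬝ᵥ (S *ᵥ w))) ∧
    E0S = Φ ((1/2 : ℝ) * (w ⬝ᵥ (ΔC - ΔD)) / Real.sqrt (w ⬝ᵥ (S *ᵥ w))) ∧
    E1T = Φ ((1/2 : ℝ) * (w ⬝ᵥ (ΔC - ΔD)) / Real.sqrt (w ⬝ᵥ (S *ᵥ w))) ∧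
    WGE = max (Φ (-(1/2 : ℝ) * (w ⬝ᵥ (ΔC + ΔD)) / Real.sqrt (w ⬝ᵥ (S *ᵥ w))))
              (Φ ((1/2 : ℝ) * (w ⬝ᵥ (ΔC - ΔD)) / Real.sqrt (w ⬝ᵥ (S *ᵥ w)))) := by
  have hvar : 0 < w ⬝ᵥ (S *ᵥ w) := by simpa using hS.dotProduct_mulVec_pos hw
  have hv : (w ⬝ᵥ (S *ᵥ w)).toNNReal ≠ 0 := by simpa using hvar
  have hsqrt : √((w ⬝ᵥ (S *ᵥ w)).toNNReal : ℝ) = √(w ⬝ᵥ (S *ᵥ w)) := by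
    rw [Real.coe_toNNReal _ hvar.le]
  have error_le (m : ℝ) : gaussianReal m (w ⬝ᵥ (S *ᵥ w)).toNNReal {z | z ≤ 1/2}
      = Φ ((1/2 - m) / √(w ⬝ᵥ (S *ᵥ w))) := by
    rw [hΦ, ← hsqrt]
    exact gaussianReal_Iic m _ hv
  have error_gt (m : ℝ) : gaussianReal m (w ⬝ᵥ (S *ᵥ w)).toNNReal {z | 1/2 < z}
      = Φ ((m - 1/2) / √(w ⬝ᵥ (S *ᵥ w))) := by
    rw [hΦ, ← hsqrt]
    exact gaussianReal_Ioi m _ hv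
  have hshift : w ⬝ᵥ μ1S - w ⬝ᵥ μ0S = w ⬝ᵥ μ1T - w ⬝ᵥ μ0T := by
    simpa only [dotProduct_sub] using congrArg (w ⬝ᵥ ·) hmean
  obtain ⟨h0T, h1S, h0S, h1T⟩ :
      w ⬝ᵥ μ0T + b - 1/2 = -(1/2 : ℝ) * (w ⬝ᵥ (ΔC + ΔD)) ∧
      1/2 - (w ⬝ᵥ μ1S + b) = -(1/2 : ℝ) * (w ⬝ᵥ (ΔC + ΔD)) ∧
      w ⬝ᵥ μ0S + b - 1/2 = (1/2 : ℝ) * (w ⬝ᵥ (ΔC - ΔD)) ∧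
      1/2 - (w ⬝ᵥ μ1T + b) = (1/2 : ℝ) * (w ⬝ᵥ (ΔC - ΔD)) := by
    subst hb hΔC hΔD
    simp only [dotProduct_add, dotProduct_sub]
    exact ⟨by ring, by ring, by ring, by linarith⟩
  rw [hWGE, hE0S, hE0T, hE1S, hE1T, error_gt, error_gt, error_le, error_le, h0T, h1S, h0S, h1T]
  refine ⟨rfl, rfl, rfl, rfl, ?_⟩
  rw [max_comm (Φ _), max_max_max_comm, max_self, max_self]
end

section
/- Fix p ∈ ℕ, group means μ^{(y,d)} ∈ ℝ^p for (y,d) ∈ {0,1} × {S,T} satisfying μ^{(1,S)} − μ^{(0,S)} = μ^{(1,T)} − μ^{(0,T)}, with Δ_D := μ^{(1,S)} − μ^{(0,S)}, Δ_C := μ^{(0,S)} − μ^{(0,T)}. Let Σ ∈ ℝ^{p×p} be symmetric positive definite, let 0 < π₀ ≤ 1/4 with priors π^{(0,T)} = π^{(1,S)} = π₀, π^{(0,S)} = π^{(1,T)} = 1/2 − π₀, and for each group let ν^{(y,d)} be a Borel probability measure on ℝ^p with mean μ^{(y,d)} and covariance Σ. Then the standard risk R_SRM(w,b) := Σ_{(y,d)}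 π^{(y,d)} ∫ (y − ⟨w,x⟩ − b)² dν^{(y,d)}(x) has the unique minimizer w*_SRM = (1/4)(Σ + 2π₀(1 − 2π₀) Δ_C Δ_Cᵀ + (1/4) Δ̄ Δ̄ᵀ)⁻¹ Δ̄ and b*_SRM = 1/2 − (1/2)⟨w*_SRM, μ^{(0,T)} + μ^{(1,S)}⟩, where Δ̄ := Δ_D − (1 − 4π₀) Δ_C. -/
/-!
By bias–variance, the risk of group `(y,d)` is `(y − b − ⟨w, μ^{(y,d)}⟩)² + wᵀΣw`. Since the four
means form a parallelogram, the prior-weighted squared mean residuals collapse to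
`(b − β(w))² + 2π₀(1 − 2π₀)⟨w, Δ_C⟩² + ¼⟨w, Δ̄⟩² − ½⟨w, Δ̄⟩ + ¼` with
`β(w) = ½ − ½⟨w, μ^{(0,T)} + μ^{(1,S)}⟩`. Hence `R(w,b) = (b − β(w))² + wᵀAw − 2⟨w, Δ̄/4⟩ + ¼` for the
positive definite `A` of the statement, and completing the square in `w` gives the unique minimizer
`w = A⁻¹Δ̄/4`, `b = β(w)`.
-/

open MeasureTheory Matrix

section SecondMoments

variable {ι : Type*} [Fintype ι] {ν : Measure (ι → ℝ)}

lemma memLp_two_dotProduct_sub [IsFiniteMeasure ν] (h2 : MemLp id 2 ν) (w μ : ι → ℝ) :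
    MemLp (fun x => w ⬝ᵥ (x - μ)) 2 ν :=
  memLp_finsetSum _ fun i _ => ((h2.eval i).sub (memLp_const (μ i))).const_mul (w i)

variable {μ : ι → ℝ} [IsProbabilityMeasure ν]

lemma integral_dotProduct_sub_mean (h2 : MemLp id 2 ν) (hm : ∀ i, ∫ x, x i ∂ν = μ i)
    (w : ι → ℝ) : ∫ x, w ⬝ᵥ (x - μ) ∂ν = 0 := by
  have hint : ∀ i, Integrable (fun x : ι → ℝ => x i) ν :=
    fun i => (h2.eval i).integrable one_le_two
  simp only [dotProduct, Pi.sub_apply]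
  rw [integral_finsetSum (f := fun i (x : ι → ℝ) => w i * (x i - μ i)) _
    fun i _ => ((hint i).sub (integrable_const _)).const_mul _]
  simp [integral_const_mul, integral_sub (hint _) (integrable_const _), hm]

lemma integral_dotProduct_sub_mean_sq (h2 : MemLp id 2 ν) {S : Matrix ι ι ℝ}
    (hc : ∀ i j, ∫ x, (x i - μ i) * (x j - μ j) ∂ν = S i j) (w : ι → ℝ) :
    ∫ x, (w ⬝ᵥ (x - μ)) ^ 2 ∂ν = w ⬝ᵥ (S *ᵥ w) := by
  have hcentered : ∀ i, MemLp (fun x : ι → ℝ => x i - μ i) 2 ν :=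
    fun i => (h2.eval i).sub (memLp_const _)
  have hprod : ∀ i j, Integrable (fun x : ι → ℝ => (x i - μ i) * (x j - μ j)) ν :=
    fun i j => (hcentered i).integrable_mul (hcentered j)
  have hexpand : ∀ x : ι → ℝ, (w ⬝ᵥ (x - μ)) ^ 2
      = ∑ i, ∑ j, w i * w j * ((x i - μ i) * (x j - μ j)) := by
    intro x
    simp only [sq, dotProduct, Pi.sub_apply, Finset.sum_mul_sum]
    exact Finset.sum_congr rfl fun i _ => Finset.sum_congr rfl fun j _ => by ring
  simp_rw [hexpand]
  rw [integral_finsetSum _ fun i _ => integrable_finsetSum _ fun j _ => (hprod i j).const_mul _]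
  simp only [integral_finsetSum _ fun j _ => (hprod _ j).const_mul _, integral_const_mul, hc,
    dotProduct, mulVec, Finset.mul_sum]
  exact Finset.sum_congr rfl fun i _ => Finset.sum_congr rfl fun j _ => by ring

theorem integral_sq_loss_eq (h2 : MemLp id 2 ν) (hm : ∀ i, ∫ x, x i ∂ν = μ i)
    {S : Matrix ι ι ℝ} (hc : ∀ i j, ∫ x, (x i - μ i) * (x j - μ j) ∂ν = S i j)
    (w : ι → ℝ) (c b : ℝ) :
    ∫ x, (c - w ⬝ᵥ x - b) ^ 2 ∂ν = (c - b - w ⬝ᵥ μ) ^ 2 + w ⬝ᵥ (S *ᵥ w) := by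
  set a := c - b - w ⬝ᵥ μ
  have hY := memLp_two_dotProduct_sub h2 w μ
  have hY_lin : Integrable (fun x => 2 * a * w ⬝ᵥ (x - μ)) ν :=
    (hY.integrable one_le_two).const_mul _
  have hconst_sub : Integrable (fun x => a ^ 2 - 2 * a * w ⬝ᵥ (x - μ)) ν :=
    (integrable_const _).sub hY_lin
  have hdecomp : ∀ x, (c - w ⬝ᵥ x - b) ^ 2
      = (a ^ 2 - 2 * a * w ⬝ᵥ (x - μ)) + (w ⬝ᵥ (x - μ)) ^ 2 := by
    intro x
    rw [dotProduct_sub]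
    ring
  simp_rw [hdecomp]
  rw [integral_add hconst_sub hY.integrable_sq,
    integral_sub (integrable_const _) hY_lin, integral_const_mul,
    integral_dotProduct_sub_mean h2 hm, integral_dotProduct_sub_mean_sq h2 hc]
  simp

end SecondMoments

section Quadratic

variable {ι : Type*} [Fintype ι] {A : Matrix ι ι ℝ}

lemma dotProduct_vecMulVec_self_mulVec (a w : ι → ℝ) :
    w ⬝ᵥ (vecMulVec a a *ᵥ w) = (w ⬝ᵥ a) ^ 2 := by
  rw [vecMulVec_mulVec]
  simp [dotProduct_comm a w, sq]

lemma Matrix.PosDef.add_smul_vecMulVec_self_s9 (hA : A.PosDef) {c : ℝ} (hc : 0 ≤ c) (a : ι → ℝ) :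
    (A + c • vecMulVec a a).PosDef := by
  simpa using hA.add_posSemidef ((posSemidef_vecMulVec_self_star a).smul hc)

lemma Matrix.IsHermitian.dotProduct_mulVec_comm (hA : A.IsHermitian) (x y : ι → ℝ) :
    x ⬝ᵥ (A *ᵥ y) = y ⬝ᵥ (A *ᵥ x) := by
  calc x ⬝ᵥ (A *ᵥ y) = (x ᵥ* Aᵀ) ⬝ᵥ y := by
        rw [← conjTranspose_eq_transpose_of_trivial, hA.eq, dotProduct_mulVec]
    _ = y ⬝ᵥ (A *ᵥ x) := by rw [vecMul_transpose, dotProduct_comm]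

lemma Matrix.IsHermitian.dotProduct_mulVec_sub_two_mul {w₀ g : ι → ℝ} (hA : A.IsHermitian)
    (hw₀ : A *ᵥ w₀ = g) (w : ι → ℝ) :
    w ⬝ᵥ (A *ᵥ w) - 2 * (w ⬝ᵥ g) = (w - w₀) ⬝ᵥ (A *ᵥ (w - w₀)) - w₀ ⬝ᵥ (A *ᵥ w₀) := by
  rw [← hw₀, mulVec_sub, dotProduct_sub, sub_dotProduct, sub_dotProduct,
    hA.dotProduct_mulVec_comm w₀ w]
  ring

theorem Matrix.PosDef.minimizer_sq_add_quadratic (hA : A.PosDef) {w₀ g : ι → ℝ}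
    (hw₀ : A *ᵥ w₀ = g) (φ : (ι → ℝ) → ℝ) (c : ℝ) {F : (ι → ℝ) → ℝ → ℝ}
    (hF : ∀ w b, F w b = (b - φ w) ^ 2 + (w ⬝ᵥ (A *ᵥ w) - 2 * (w ⬝ᵥ g)) + c) :
    (∀ w b, F w₀ (φ w₀) ≤ F w b) ∧ (∀ w b, F w b = F w₀ (φ w₀) → w = w₀ ∧ b = φ w₀) := by
  have hexcess : ∀ w b,
      F w b = F w₀ (φ w₀) + ((w - w₀) ⬝ᵥ (A *ᵥ (w - w₀)) + (b - φ w) ^ 2) := by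
    intro w b
    rw [hF, hF, hA.isHermitian.dotProduct_mulVec_sub_two_mul hw₀,
      hA.isHermitian.dotProduct_mulVec_sub_two_mul hw₀]
    simp only [sub_self, mulVec_zero, dotProduct_zero]
    ring
  have hnonneg : ∀ w, 0 ≤ (w - w₀) ⬝ᵥ (A *ᵥ (w - w₀)) := fun w => by
    simpa using hA.posSemidef.dotProduct_mulVec_nonneg (w - w₀)
  refine ⟨fun w b => ?_, fun w b hwb => ?_⟩
  · rw [hexcess w b]
    linarith [hnonneg w, sq_nonneg (b - φ w)]
  · rw [hexcess w b, add_eq_left] at hwb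
    obtain ⟨hquad, hsq⟩ := (add_eq_zero_iff_of_nonneg (hnonneg w) (sq_nonneg _)).1 hwb
    obtain rfl : w = w₀ := by
      by_contra hne
      simpa [hquad] using hA.dotProduct_mulVec_pos (sub_ne_zero.2 hne)
    exact ⟨rfl, sub_eq_zero.1 (pow_eq_zero_iff two_ne_zero |>.1 hsq)⟩

end Quadratic

lemma weighted_group_sq_residuals_eq (π₀ b m0S m0T m1S m1T : ℝ) (h : m1S - m0S = m1T - m0T) :
    (1/2 - π₀) * (0 - b - m0S) ^ 2 + π₀ * (0 - b - m0T) ^ 2 + π₀ * (1 - b - m1S) ^ 2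
        + (1/2 - π₀) * (1 - b - m1T) ^ 2
      = (b - (1/2 - 1/2 * (m0T + m1S))) ^ 2
        + (2 * π₀ * (1 - 2 * π₀) * (m0S - m0T) ^ 2
          + 1/4 * (m1S - m0S - (1 - 4 * π₀) * (m0S - m0T)) ^ 2
          - 2 * (1/4 * (m1S - m0S - (1 - 4 * π₀) * (m0S - m0T)))) + 1/4 := by
  obtain rfl : m1T = m1S - m0S + m0T := by linarith
  ring

/-- Theorem 2, SRM part: the standard risk
`R_SRM(w,b) = Σ_{(y,d)} π^{(y,d)} ∫ (y − ⟨w,x⟩ − b)² dν^{(y,d)}` with priors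
`π^{(0,T)} = π^{(1,S)} = π₀`, `π^{(0,S)} = π^{(1,T)} = 1/2 − π₀`, group means forming a
parallelogram and common covariance `Σ`, has the unique minimizer
`w*_SRM = (1/4)(Σ + 2π₀(1 − 2π₀)Δ_CΔ_Cᵀ + (1/4)Δ̄Δ̄ᵀ)⁻¹Δ̄`,
`b*_SRM = 1/2 − (1/2)⟨w*_SRM, μ^{(0,T)} + μ^{(1,S)}⟩`, where `Δ̄ = Δ_D − (1 − 4π₀)Δ_C`. -/
theorem srm_optimal_model
    (p : ℕ) (μ0S μ0T μ1S μ1T : Fin p → ℝ)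
    (hmean : μ1S - μ0S = μ1T - μ0T)
    (ΔD ΔC Δbar : Fin p → ℝ)
    (hΔD : ΔD = μ1S - μ0S) (hΔC : ΔC = μ0S - μ0T)
    (π₀ : ℝ) (hπ₀pos : 0 < π₀) (hπ₀le : π₀ ≤ 1/4)
    (hΔbar : Δbar = ΔD - (1 - 4 * π₀) • ΔC)
    (S : Matrix (Fin p) (Fin p) ℝ) (hS : S.PosDef)
    (ν0S ν0T ν1S ν1T : Measure (Fin p → ℝ))
    [IsProbabilityMeasure ν0S] [IsProbabilityMeasure ν0T]
    [IsProbabilityMeasure ν1S] [IsProbabilityMeasure ν1T]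
    (hint : ∀ ν ∈ [ν0S, ν0T, ν1S, ν1T], Integrable (fun x => ‖x‖ ^ 2) ν)
    (hmeans : (∀ i, (∫ x, x i ∂ν0S) = μ0S i) ∧ (∀ i, (∫ x, x i ∂ν0T) = μ0T i) ∧
              (∀ i, (∫ x, x i ∂ν1S) = μ1S i) ∧ (∀ i, (∫ x, x i ∂ν1T) = μ1T i))
    (hcovs : (∀ i j, (∫ x, (x i - μ0S i) * (x j - μ0S j) ∂ν0S) = S i j) ∧
             (∀ i j, (∫ x, (x i - μ0T i) * (x j - μ0T j) ∂ν0T) = S i j) ∧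
             (∀ i j, (∫ x, (x i - μ1S i) * (x j - μ1S j) ∂ν1S) = S i j) ∧
             (∀ i j, (∫ x, (x i - μ1T i) * (x j - μ1T j) ∂ν1T) = S i j))
    (R : (Fin p → ℝ) → ℝ → ℝ)
    (hR : ∀ w b, R w b =
      (1/2 - π₀) * (∫ x, ((0 : ℝ) - w ⬝ᵥ x - b) ^ 2 ∂ν0S)
        + π₀ * (∫ x, ((0 : ℝ) - w ⬝ᵥ x - b) ^ 2 ∂ν0T)
        + π₀ * (∫ x, ((1 : ℝ) - w ⬝ᵥ x - b) ^ 2 ∂ν1S)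
        + (1/2 - π₀) * (∫ x, ((1 : ℝ) - w ⬝ᵥ x - b) ^ 2 ∂ν1T))
    (wstar : Fin p → ℝ)
    (hwstar : wstar = (1/4 : ℝ) •
      ((S + (2 * π₀ * (1 - 2 * π₀)) • vecMulVec ΔC ΔC
          + (1/4 : ℝ) • vecMulVec Δbar Δbar)⁻¹ *ᵥ Δbar))
    (bstar : ℝ) (hbstar : bstar = 1/2 - (1/2 : ℝ) * (wstar ⬝ᵥ (μ0T + μ1S))) :
    (∀ w b, R wstar bstar ≤ R w b) ∧
    (∀ w b, R w b = R wstar bstar → w = wstar ∧ b = bstar) := by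
  obtain ⟨hm0S, hm0T, hm1S, hm1T⟩ := hmeans
  obtain ⟨hc0S, hc0T, hc1S, hc1T⟩ := hcovs
  have h2 : ∀ ν ∈ [ν0S, ν0T, ν1S, ν1T], MemLp id 2 ν := fun ν hν =>
    (memLp_two_iff_integrable_sq_norm aestronglyMeasurable_id).2 (hint ν hν)
  set A := S + (2 * π₀ * (1 - 2 * π₀)) • vecMulVec ΔC ΔC + (1/4 : ℝ) • vecMulVec Δbar Δbar
  have hA : A.PosDef :=
    (hS.add_smul_vecMulVec_self_s9 (by nlinarith) ΔC).add_smul_vecMulVec_self_s9 (by norm_num) Δbar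
  have hAw : A *ᵥ wstar = (1/4 : ℝ) • Δbar := by
    rw [hwstar, mulVec_smul, mulVec_mulVec,
      mul_nonsing_inv _ ((isUnit_iff_isUnit_det A).1 hA.isUnit), one_mulVec]
  subst hbstar
  refine hA.minimizer_sq_add_quadratic hAw (fun w => 1/2 - 1/2 * (w ⬝ᵥ (μ0T + μ1S))) (1/4)
    fun w b => ?_
  have hres := weighted_group_sq_residuals_eq π₀ b (w ⬝ᵥ μ0S) (w ⬝ᵥ μ0T) (w ⬝ᵥ μ1S) (w ⬝ᵥ μ1T)
    (by simpa only [dotProduct_sub] using congrArg (w ⬝ᵥ ·) hmean)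
  rw [hR, integral_sq_loss_eq (h2 ν0S (by simp)) hm0S hc0S,
    integral_sq_loss_eq (h2 ν0T (by simp)) hm0T hc0T,
    integral_sq_loss_eq (h2 ν1S (by simp)) hm1S hc1S,
    integral_sq_loss_eq (h2 ν1T (by simp)) hm1T hc1T]
  simp only [A, add_mulVec, smul_mulVec, dotProduct_add, dotProduct_smul, smul_eq_mul,
    dotProduct_vecMulVec_self_mulVec, hΔbar, hΔD, hΔC, dotProduct_sub]
  linear_combination hres
end

section
/- Let Σ ∈ ℝ^{p×p} be symmetric positive definite, Δ_C, Δ_D ∈ ℝ^p, and 0 < π₀ ≤ 1/4. Set β := 2π₀(1 − 2π₀), Δ̄ := Δ_D − (1 − 4π₀)Δ_C, A := Σ + βΔ_CΔ_Cᵀ, and c_{π₀} := (1 − 4π₀ + β·Δ_CᵀΣ⁻¹Δ_D)/(1 + β·Δ_CᵀΣ⁻¹Δ_C). Then (1/4)(Σ + βΔ_CΔ_Cᵀ + (1/4)Δ̄Δ̄ᵀ)⁻¹ Δ̄ = γ_SRM · (Σ⁻¹Δ_D − c_{π₀}·Σ⁻¹Δ_C), where γ_SRM := 1/(4 + Δ̄ᵀA⁻¹Δ̄)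 > 0. -/
/-!
Both inverses are rank-one updates, so the Sherman–Morrison formula applies twice. Applied to
`A + ¼ Δ̄Δ̄ᵀ` and the vector `Δ̄` itself it only rescales `A⁻¹Δ̄` by `4 / (4 + Δ̄ᵀA⁻¹Δ̄)`; applied
to `A = Σ + β Δ_CΔ_Cᵀ` it splits `A⁻¹Δ̄` as `Σ⁻¹Δ_D − c_{π₀} Σ⁻¹Δ_C`. Since `0 < π₀ ≤ 1/4`
gives `β ≥ 0`, the matrix `A` is positive definite and all denominators are positive.
-/

namespace Matrix

section RankOneUpdate

variable {K n : Type*} [Field K] [Fintype n] [DecidableEq n]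

theorem det_add_vecMulVec {A : Matrix n n K} (hA : IsUnit A.det) (u v : n → K) :
    (A + vecMulVec u v).det = A.det * (1 + v ⬝ᵥ (A⁻¹ *ᵥ u)) := by
  rw [vecMulVec_eq Unit, det_add_replicateCol_mul_replicateRow hA, det_unique (1 + _), add_apply,
    one_apply_eq, Matrix.mul_assoc, ← replicateCol_mulVec, replicateRow_mul_replicateCol_apply]

/-- **Sherman–Morrison formula**, applied to a vector. -/
theorem inv_add_vecMulVec_mulVec {A : Matrix n n K} (hA : IsUnit A.det) (u v w : n → K)
    (hd : 1 + v ⬝ᵥ (A⁻¹ *ᵥ u) ≠ 0) :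
    (A + vecMulVec u v)⁻¹ *ᵥ w =
      A⁻¹ *ᵥ w - ((v ⬝ᵥ (A⁻¹ *ᵥ w)) / (1 + v ⬝ᵥ (A⁻¹ *ᵥ u))) • (A⁻¹ *ᵥ u) := by
  have hM : IsUnit (A + vecMulVec u v).det := by
    rw [det_add_vecMulVec hA]
    exact hA.mul hd.isUnit
  have := invertibleOfIsUnitDet _ hM
  have hAA (x : n → K) : A *ᵥ (A⁻¹ *ᵥ x) = x := by
    rw [mulVec_mulVec, mul_nonsing_inv A hA, one_mulVec]
  refine inv_mulVec_eq_vec (Eq.symm ?_)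
  rw [add_mulVec, vecMulVec_mulVec, mulVec_sub, mulVec_smul, hAA, hAA, dotProduct_sub,
    dotProduct_smul, smul_eq_mul]
  have hcoef : v ⬝ᵥ (A⁻¹ *ᵥ w) - v ⬝ᵥ (A⁻¹ *ᵥ w) / (1 + v ⬝ᵥ (A⁻¹ *ᵥ u)) * (v ⬝ᵥ (A⁻¹ *ᵥ u))
      = v ⬝ᵥ (A⁻¹ *ᵥ w) / (1 + v ⬝ᵥ (A⁻¹ *ᵥ u)) := by
    field_simp
    ring
  rw [op_smul_eq_smul, hcoef, sub_add_cancel]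

theorem inv_add_smul_vecMulVec_self_mulVec {A : Matrix n n K} (hA : IsUnit A.det) (c : K)
    (u : n → K) (hd : 1 + c * (u ⬝ᵥ (A⁻¹ *ᵥ u)) ≠ 0) :
    (A + c • vecMulVec u u)⁻¹ *ᵥ u = (1 + c * (u ⬝ᵥ (A⁻¹ *ᵥ u)))⁻¹ • (A⁻¹ *ᵥ u) := by
  rw [← vecMulVec_smul, inv_add_vecMulVec_mulVec hA _ _ _ (by rwa [smul_dotProduct]),
    smul_dotProduct, smul_eq_mul]
  have hcoef : 1 - c * (u ⬝ᵥ (A⁻¹ *ᵥ u)) / (1 + c * (u ⬝ᵥ (A⁻¹ *ᵥ u)))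
      = (1 + c * (u ⬝ᵥ (A⁻¹ *ᵥ u)))⁻¹ := by
    field_simp
    ring
  rw [← hcoef, sub_smul, one_smul]

end RankOneUpdate

theorem posSemidef_smul_vecMulVec_self {n : Type*} [Fintype n] {c : ℝ} (hc : 0 ≤ c)
    (v : n → ℝ) :
    (c • vecMulVec v v).PosSemidef := by
  simpa using (posSemidef_vecMulVec_self_star v).smul hc

end Matrix

open Matrix

/-- decomposition of the optimal SRM weight vector. With `β := 2π₀(1 − 2π₀)`,
`Δ̄ := Δ_D − (1 − 4π₀)Δ_C`, `A := Σ + βΔ_CΔ_Cᵀ` and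
`c_{π₀} := (1 − 4π₀ + βΔ_CᵀΣ⁻¹Δ_D)/(1 + βΔ_CᵀΣ⁻¹Δ_C)`,
`(1/4)(Σ + βΔ_CΔ_Cᵀ + (1/4)Δ̄Δ̄ᵀ)⁻¹Δ̄ = γ_SRM (Σ⁻¹Δ_D − c_{π₀}Σ⁻¹Δ_C)` where
`γ_SRM := 1/(4 + Δ̄ᵀA⁻¹Δ̄) > 0`. -/
theorem srm_weight_decomposition
    (p : ℕ) (S : Matrix (Fin p) (Fin p) ℝ) (hS : S.PosDef)
    (ΔC ΔD : Fin p → ℝ)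
    (π₀ : ℝ) (hπ₀pos : 0 < π₀) (hπ₀le : π₀ ≤ 1/4)
    (β : ℝ) (hβ : β = 2 * π₀ * (1 - 2 * π₀))
    (Δbar : Fin p → ℝ) (hΔbar : Δbar = ΔD - (1 - 4 * π₀) • ΔC)
    (A : Matrix (Fin p) (Fin p) ℝ) (hA : A = S + β • vecMulVec ΔC ΔC)
    (cπ : ℝ)
    (hcπ : cπ = (1 - 4 * π₀ + β * (ΔC ⬝ᵥ (S⁻¹ *ᵥ ΔD))) / (1 + β * (ΔC ⬝ᵥ (S⁻¹ *ᵥ ΔC))))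
    (γSRM : ℝ) (hγ : γSRM = 1 / (4 + Δbar ⬝ᵥ (A⁻¹ *ᵥ Δbar))) :
    (1/4 : ℝ) • ((S + β • vecMulVec ΔC ΔC + (1/4 : ℝ) • vecMulVec Δbar Δbar)⁻¹ *ᵥ Δbar)
        = γSRM • (S⁻¹ *ᵥ ΔD - cπ • (S⁻¹ *ᵥ ΔC)) ∧
      0 < γSRM := by
  have hβ₀ : 0 ≤ β := by rw [hβ]; nlinarith
  have hApd : A.PosDef := hA ▸ hS.add_posSemidef (posSemidef_smul_vecMulVec_self hβ₀ ΔC)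
  have hs : 0 ≤ ΔC ⬝ᵥ (S⁻¹ *ᵥ ΔC) := by
    simpa using hS.inv.posSemidef.dotProduct_mulVec_nonneg ΔC
  have hr : 0 ≤ Δbar ⬝ᵥ (A⁻¹ *ᵥ Δbar) := by
    simpa using hApd.inv.posSemidef.dotProduct_mulVec_nonneg Δbar
  have hAinv : A⁻¹ *ᵥ Δbar = S⁻¹ *ᵥ ΔD - cπ • (S⁻¹ *ᵥ ΔC) := by
    have hcoef : (1 - 4 * π₀) + β * (ΔC ⬝ᵥ (S⁻¹ *ᵥ ΔD) - (1 - 4 * π₀) * (ΔC ⬝ᵥ (S⁻¹ *ᵥ ΔC)))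
        / (1 + β * (ΔC ⬝ᵥ (S⁻¹ *ᵥ ΔC))) = cπ := by
      rw [hcπ]
      field_simp
      ring
    rw [hA, ← vecMulVec_smul, inv_add_vecMulVec_mulVec ((isUnit_iff_isUnit_det S).mp hS.isUnit)
      _ _ _ (by rw [smul_dotProduct, smul_eq_mul]; positivity), hΔbar, mulVec_sub, mulVec_smul,
      dotProduct_sub, dotProduct_smul, smul_dotProduct, smul_dotProduct, smul_eq_mul,
      smul_eq_mul, smul_eq_mul, ← hcoef]
    module
  refine ⟨?_, by rw [hγ]; positivity⟩
  rw [← hA, inv_add_smul_vecMulVec_self_mulVec ((isUnit_iff_isUnit_det A).mp hApd.isUnit) _ _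
    (by positivity), smul_smul, ← hAinv, hγ]
  congr 1
  field_simp
end

section
/- Let Σ ∈ ℝ^{p×p} be symmetric positive definite, Δ_C, Δ_D ∈ ℝ^p with Δ_D ≠ 0 and Δ_CᵀΣ⁻¹Δ_D = 0, let c ∈ ℝ, γ > 0, and set w := γ(Σ⁻¹Δ_D − c·Σ⁻¹Δ_C), a := √(Δ_DᵀΣ⁻¹Δ_D), b := √(Δ_CᵀΣ⁻¹Δ_C). Then wᵀΣw = γ²(a² + c²b²) > 0, and the two error arguments satisfy −(1/2)⟨w, Δ_C + Δ_D⟩/√(wᵀΣw) = (−a² + c·b²)/(2√(a² + c²b²)) and (1/2)⟨w, Δ_C − Δ_D⟩/√(wᵀΣw) = (−a² − c·b²)/(2√(a² + c²b²)). In particular, if c ≥ 0 then the first quantity is greater than or equal to the second. -/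
/-!
With `M = Σ⁻¹` (symmetric), the vector `u = MΔ_D − c MΔ_C` satisfies `⟨u, Δ_D⟩ = a²`
and, by orthogonality, `⟨u, Δ_C⟩ = −c b²`; moreover `Σ w = γ (Δ_D − c Δ_C)`. Every
quantity in the statement is a combination of these two pairings, and the factor `γ`
cancels against `√(wᵀΣw) = γ √(a² + c² b²)`.
-/

open Matrix

namespace Matrix

variable {n : Type*} [Fintype n]

theorem IsSymm.dotProduct_mulVec_comm {R : Type*} [CommSemiring R] {M : Matrix n n R}
    (hM : M.IsSymm) (x y : n → R) : x ⬝ᵥ (M *ᵥ y) = y ⬝ᵥ (M *ᵥ x) := by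
  rw [dotProduct_mulVec, ← mulVec_transpose, hM.eq, dotProduct_comm]

theorem mulVec_nonsing_inv_mulVec [DecidableEq n] {R : Type*} [CommRing R] {A : Matrix n n R}
    (h : IsUnit A.det) (v : n → R) : A *ᵥ (A⁻¹ *ᵥ v) = v := by
  rw [mulVec_mulVec, mul_nonsing_inv _ h, one_mulVec]

section Orthogonal

variable {R : Type*} [CommRing R] {M : Matrix n n R} {x y : n → R}

theorem mulVec_sub_smul_mulVec_dotProduct_left (hM : M.IsSymm)
    (horth : y ⬝ᵥ (M *ᵥ x) = 0) (c : R) :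
    (M *ᵥ x - c • M *ᵥ y) ⬝ᵥ x = x ⬝ᵥ (M *ᵥ x) := by
  rw [sub_dotProduct, smul_dotProduct, dotProduct_comm (M *ᵥ y), hM.dotProduct_mulVec_comm x y,
    horth, smul_zero, sub_zero, dotProduct_comm]

theorem mulVec_sub_smul_mulVec_dotProduct_right (horth : y ⬝ᵥ (M *ᵥ x) = 0) (c : R) :
    (M *ᵥ x - c • M *ᵥ y) ⬝ᵥ y = -(c * (y ⬝ᵥ (M *ᵥ y))) := by
  rw [sub_dotProduct, smul_dotProduct, dotProduct_comm (M *ᵥ x), horth,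
    dotProduct_comm (M *ᵥ y), smul_eq_mul, zero_sub]

end Orthogonal

end Matrix

theorem Real.mul_mul_div_sqrt_sq_mul {γ : ℝ} (hγ : 0 < γ) (k t A : ℝ) :
    k * (γ * t) / √(γ ^ 2 * A) = k * t / √A := by
  rw [Real.sqrt_mul (by positivity), Real.sqrt_sq hγ.le, mul_left_comm,
    mul_div_mul_left _ _ hγ.ne']

/-- closed form of the error arguments for a weight vector of the form
`w = γ(Σ⁻¹Δ_D − c·Σ⁻¹Δ_C)` under the orthogonality assumption `Δ_CᵀΣ⁻¹Δ_D = 0`, in terms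
of `a = ‖Δ_D‖_{Σ⁻¹}` and `b = ‖Δ_C‖_{Σ⁻¹}`; if `c ≥ 0` the minority argument dominates. -/
theorem srm_error_arguments
    (p : ℕ) (S : Matrix (Fin p) (Fin p) ℝ) (hS : S.PosDef)
    (ΔC ΔD : Fin p → ℝ) (hΔD : ΔD ≠ 0)
    (horth : ΔC ⬝ᵥ (S⁻¹ *ᵥ ΔD) = 0)
    (c γ : ℝ) (hγ : 0 < γ)
    (w : Fin p → ℝ) (hw : w = γ • (S⁻¹ *ᵥ ΔD - c • (S⁻¹ *ᵥ ΔC)))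
    (a b : ℝ)
    (ha : a = Real.sqrt (ΔD ⬝ᵥ (S⁻¹ *ᵥ ΔD)))
    (hb : b = Real.sqrt (ΔC ⬝ᵥ (S⁻¹ *ᵥ ΔC))) :
    w ⬝ᵥ (S *ᵥ w) = γ ^ 2 * (a ^ 2 + c ^ 2 * b ^ 2) ∧
    0 < w ⬝ᵥ (S *ᵥ w) ∧
    -(1/2 : ℝ) * (w ⬝ᵥ (ΔC + ΔD)) / Real.sqrt (w ⬝ᵥ (S *ᵥ w))
      = (-a ^ 2 + c * b ^ 2) / (2 * Real.sqrt (a ^ 2 + c ^ 2 * b ^ 2)) ∧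
    (1/2 : ℝ) * (w ⬝ᵥ (ΔC - ΔD)) / Real.sqrt (w ⬝ᵥ (S *ᵥ w))
      = (-a ^ 2 - c * b ^ 2) / (2 * Real.sqrt (a ^ 2 + c ^ 2 * b ^ 2)) ∧
    (0 ≤ c →
      (-a ^ 2 - c * b ^ 2) / (2 * Real.sqrt (a ^ 2 + c ^ 2 * b ^ 2))
        ≤ (-a ^ 2 + c * b ^ 2) / (2 * Real.sqrt (a ^ 2 + c ^ 2 * b ^ 2))) := by
  have hSi : S⁻¹.PosDef := hS.inv
  have ha2 : a ^ 2 = ΔD ⬝ᵥ (S⁻¹ *ᵥ ΔD) := by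
    rw [ha, Real.sq_sqrt (by simpa using hSi.posSemidef.dotProduct_mulVec_nonneg ΔD)]
  have hb2 : b ^ 2 = ΔC ⬝ᵥ (S⁻¹ *ᵥ ΔC) := by
    rw [hb, Real.sq_sqrt (by simpa using hSi.posSemidef.dotProduct_mulVec_nonneg ΔC)]
  have huD : (S⁻¹ *ᵥ ΔD - c • S⁻¹ *ᵥ ΔC) ⬝ᵥ ΔD = a ^ 2 := by
    rw [ha2]
    exact mulVec_sub_smul_mulVec_dotProduct_left (isHermitian_iff_isSymm.mp hSi.isHermitian) horth c
  have huC : (S⁻¹ *ᵥ ΔD - c • S⁻¹ *ᵥ ΔC) ⬝ᵥ ΔC = -(c * b ^ 2) := by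
    rw [hb2]
    exact mulVec_sub_smul_mulVec_dotProduct_right horth c
  have hSw : S *ᵥ w = γ • (ΔD - c • ΔC) := by
    rw [hw, ← mulVec_smul, ← mulVec_sub, mulVec_smul,
      mulVec_nonsing_inv_mulVec (isUnit_iff_ne_zero.mpr hS.det_pos.ne')]
  have hq : w ⬝ᵥ (S *ᵥ w) = γ ^ 2 * (a ^ 2 + c ^ 2 * b ^ 2) := by
    rw [hSw, hw]
    simp only [smul_dotProduct, dotProduct_smul, dotProduct_sub, huD, huC, smul_eq_mul]
    ring
  have hplus : w ⬝ᵥ (ΔC + ΔD) = γ * (a ^ 2 - c * b ^ 2) := by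
    simp only [hw, smul_dotProduct, dotProduct_add, huD, huC, smul_eq_mul]; ring
  have hminus : w ⬝ᵥ (ΔC - ΔD) = γ * (-a ^ 2 - c * b ^ 2) := by
    simp only [hw, smul_dotProduct, dotProduct_sub, huD, huC, smul_eq_mul]; ring
  have ha2_pos : 0 < a ^ 2 := by simpa [ha2] using hSi.dotProduct_mulVec_pos hΔD
  refine ⟨hq, by rw [hq]; positivity, ?_, ?_, fun hc => ?_⟩
  · rw [hplus, hq, Real.mul_mul_div_sqrt_sq_mul hγ]; ring
  · rw [hminus, hq, Real.mul_mul_div_sqrt_sq_mul hγ]; ring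
  · gcongr
    linarith [mul_nonneg hc (sq_nonneg b)]
end

section
/- Fix p ∈ ℕ, group means μ^{(y,d)} ∈ ℝ^p for (y,d) ∈ {0,1} × {S,T} satisfying μ^{(1,S)} − μ^{(0,S)} = μ^{(1,T)} − μ^{(0,T)}, with Δ_D := μ^{(1,S)} − μ^{(0,S)} ≠ 0 and Δ_C := μ^{(0,S)} − μ^{(0,T)}. Let Σ ∈ ℝ^{p×p} be symmetric positive definite with Δ_CᵀΣ⁻¹Δ_D = 0, let γ > 0, and set w := γ·Σ⁻¹Δ_D and b := 1/2 − (1/2)⟨w, μ^{(0,T)} + μ^{(1,S)}⟩. Then all four per-group Gaussian errors are equal: E^{(y,d)}(w,b) = Φ(−√(Δ_DᵀΣ⁻¹Δ_D)/2) for every (y,d) ∈ {0,1} × {S,T}, and hence WGE(w,b) = Φ(−√(Δ_DᵀΣ⁻¹Δ_D)/2). -/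
/-!
With `q = Δ_Dᵀ Σ⁻¹ Δ_D`, the score `⟨w, μ⟩` moves by `γ q` when the mean moves by `Δ_D`, and not at
all when it moves by `Δ_C` (orthogonality). So both class-0 scores are equal, both class-1 scores
exceed them by `γ q`, and the midpoint intercept places each group at distance `γ q / 2` from the
threshold `1/2`, on its correct side. The common standard deviation is `√(wᵀΣw) = γ √q`, so after
standardizing every error is `Φ(-(γ q / 2) / (γ √q)) = Φ(-√q / 2)`.
-/

open MeasureTheory ProbabilityTheory Matrix Set

namespace ProbabilityTheory

lemma gaussianReal_sq_eq_map_std (m σ : ℝ) :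
    gaussianReal m (σ ^ 2).toNNReal = (gaussianReal 0 1).map (fun z => σ * z + m) := by
  rw [show (fun z => σ * z + m) = (· + m) ∘ (σ * ·) from rfl,
    ← Measure.map_map (by fun_prop) (by fun_prop), gaussianReal_map_const_mul,
    gaussianReal_map_add_const, mul_zero, zero_add]
  congr 1
  ext
  simp [sq_nonneg]

variable {m σ : ℝ}

lemma gaussianReal_sq_Iic (hσ : 0 < σ) (t : ℝ) :
    gaussianReal m (σ ^ 2).toNNReal (Iic t) = gaussianReal 0 1 (Iic ((t - m) / σ)) := by
  rw [gaussianReal_sq_eq_map_std, Measure.map_apply (by fun_prop) measurableSet_Iic]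
  congr 1
  ext z
  simp only [mem_preimage, mem_Iic, le_div_iff₀ hσ]
  constructor <;> intro h <;> linarith

lemma gaussianReal_sq_Ioi (hσ : 0 < σ) (t : ℝ) :
    gaussianReal m (σ ^ 2).toNNReal (Ioi t) = gaussianReal 0 1 (Iic ((m - t) / σ)) := by
  have : NullSingletonClass (gaussianReal 0 1) := nullSingletonClass_gaussianReal one_ne_zero
  rw [← neg_sq, gaussianReal_sq_eq_map_std, Measure.map_apply (by fun_prop) measurableSet_Ioi,
    ← measure_congr Iio_ae_eq_Iic]
  congr 1
  ext z
  simp only [mem_preimage, mem_Ioi, mem_Iio, lt_div_iff₀ hσ]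
  constructor <;> intro h <;> linarith

end ProbabilityTheory

lemma Matrix.dotProduct_mulVec_smul_inv_mulVec {n R : Type*} [Fintype n] [DecidableEq n]
    [CommRing R] {S : Matrix n n R} (hS : IsUnit S.det) (γ : R) (v : n → R) :
    (γ • (S⁻¹ *ᵥ v)) ⬝ᵥ (S *ᵥ (γ • (S⁻¹ *ᵥ v))) = γ ^ 2 * (v ⬝ᵥ (S⁻¹ *ᵥ v)) := by
  rw [mulVec_smul, mulVec_mulVec, mul_nonsing_inv S hS, one_mulVec, smul_dotProduct,
    dotProduct_smul, dotProduct_comm, smul_eq_mul, smul_eq_mul]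
  ring

/-- for `w = γ·Σ⁻¹Δ_D` (γ > 0) with the midpoint intercept, under the
mean-structure and orthogonality (`Δ_CᵀΣ⁻¹Δ_D = 0`) assumptions, all four per-group Gaussian
errors equal `Φ(−√(Δ_DᵀΣ⁻¹Δ_D)/2)`, and hence so does the worst-group error. This is
`WGE(f_{θ*_DS}) = WGE(f_{θ*_UW}) = WGE(f_{θ*_MU}) = Φ(−‖Δ_D‖_{Σ⁻¹}/2)` of Theorem 2. -/
theorem wge_of_scaled_sigma_inv_deltaD
    (p : ℕ) (μ0S μ0T μ1S μ1T : Fin p → ℝ)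
    (hmean : μ1S - μ0S = μ1T - μ0T)
    (ΔD ΔC : Fin p → ℝ)
    (hΔD : ΔD = μ1S - μ0S) (hΔC : ΔC = μ0S - μ0T) (hΔDne : ΔD ≠ 0)
    (S : Matrix (Fin p) (Fin p) ℝ) (hS : S.PosDef)
    (horth : ΔC ⬝ᵥ (S⁻¹ *ᵥ ΔD) = 0)
    (γ : ℝ) (hγ : 0 < γ)
    (w : Fin p → ℝ) (hw : w = γ • (S⁻¹ *ᵥ ΔD))
    (b : ℝ) (hb : b = 1/2 - (1/2 : ℝ) * (w ⬝ᵥ (μ0T + μ1S)))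
    (Φ : ℝ → ENNReal) (hΦ : ∀ t, Φ t = gaussianReal 0 1 {z | z ≤ t})
    (E0S E0T E1S E1T WGE : ENNReal)
    (hE0S : E0S = gaussianReal (w ⬝ᵥ μ0S + b) (w ⬝ᵥ (S *ᵥ w)).toNNReal {z | 1/2 < z})
    (hE0T : E0T = gaussianReal (w ⬝ᵥ μ0T + b) (w ⬝ᵥ (S *ᵥ w)).toNNReal {z | 1/2 < z})
    (hE1S : E1S = gaussianReal (w ⬝ᵥ μ1S + b) (w ⬝ᵥ (S *ᵥ w)).toNNReal {z | z ≤ 1/2})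
    (hE1T : E1T = gaussianReal (w ⬝ᵥ μ1T + b) (w ⬝ᵥ (S *ᵥ w)).toNNReal {z | z ≤ 1/2})
    (hWGE : WGE = max (max E0S E0T) (max E1S E1T)) :
    E0S = Φ (-Real.sqrt (ΔD ⬝ᵥ (S⁻¹ *ᵥ ΔD)) / 2) ∧
    E0T = Φ (-Real.sqrt (ΔD ⬝ᵥ (S⁻¹ *ᵥ ΔD)) / 2) ∧
    E1S = Φ (-Real.sqrt (ΔD ⬝ᵥ (S⁻¹ *ᵥ ΔD)) / 2) ∧
    E1T = Φ (-Real.sqrt (ΔD ⬝ᵥ (S⁻¹ *ᵥ ΔD)) / 2) ∧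
    WGE = Φ (-Real.sqrt (ΔD ⬝ᵥ (S⁻¹ *ᵥ ΔD)) / 2) := by
  set q := ΔD ⬝ᵥ (S⁻¹ *ᵥ ΔD)
  have hq : 0 < q := by simpa [star] using hS.inv.dotProduct_mulVec_pos hΔDne
  have hσ : 0 < γ * √q := mul_pos hγ (Real.sqrt_pos.mpr hq)
  have hvar : w ⬝ᵥ (S *ᵥ w) = (γ * √q) ^ 2 := by
    rw [hw, dotProduct_mulVec_smul_inv_mulVec (isUnit_iff_ne_zero.mpr hS.det_pos.ne'), mul_pow,
      Real.sq_sqrt hq.le]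
  have hmargin : γ * q / 2 / (γ * √q) = √q / 2 := by
    rw [div_div, div_eq_div_iff (by positivity) two_ne_zero]
    nth_rw 1 [← Real.mul_self_sqrt hq.le]
    ring
  have hscore (v : Fin p → ℝ) : w ⬝ᵥ v = γ * (v ⬝ᵥ (S⁻¹ *ᵥ ΔD)) := by
    rw [hw, smul_dotProduct, dotProduct_comm, smul_eq_mul]
  have hshiftS : w ⬝ᵥ μ1S - w ⬝ᵥ μ0S = γ * q := by rw [← dotProduct_sub, ← hΔD, hscore]
  have hshiftC : w ⬝ᵥ μ0S - w ⬝ᵥ μ0T = 0 := by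
    rw [← dotProduct_sub, ← hΔC, hscore, horth, mul_zero]
  have hshiftT : w ⬝ᵥ μ1S - w ⬝ᵥ μ0S = w ⬝ᵥ μ1T - w ⬝ᵥ μ0T := by
    rw [← dotProduct_sub, ← dotProduct_sub, hmean]
  rw [dotProduct_add] at hb
  have herr0 (s : ℝ) (hs : s = 1 / 2 - γ * q / 2) :
      gaussianReal s (w ⬝ᵥ (S *ᵥ w)).toNNReal (Ioi (1 / 2)) = Φ (-√q / 2) := by
    rw [hvar, gaussianReal_sq_Ioi hσ, hΦ, Iic_def, hs, sub_sub_cancel_left, neg_div, hmargin,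
      neg_div]
  have herr1 (s : ℝ) (hs : s = 1 / 2 + γ * q / 2) :
      gaussianReal s (w ⬝ᵥ (S *ᵥ w)).toNNReal (Iic (1 / 2)) = Φ (-√q / 2) := by
    rw [hvar, gaussianReal_sq_Iic hσ, hΦ, Iic_def, hs, sub_add_cancel_left, neg_div, hmargin,
      neg_div]
  have e0S : E0S = Φ (-√q / 2) := hE0S.trans (herr0 _ (by linarith))
  have e0T : E0T = Φ (-√q / 2) := hE0T.trans (herr0 _ (by linarith))
  have e1S : E1S = Φ (-√q / 2) := hE1S.trans (herr1 _ (by linarith))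
  have e1T : E1T = Φ (-√q / 2) := hE1T.trans (herr1 _ (by linarith))
  refine ⟨e0S, e0T, e1S, e1T, ?_⟩
  rw [hWGE, e0S, e0T, e1S, e1T, max_self, max_self]
end

section
/- Let a > 0, b > 0 and 0 < π₀ < 1/4, and set c̃ := (1 − 4π₀)/(1 + 2π₀(1 − 2π₀)·b²). Then (−a² + c̃·b²)/(2√(a² + c̃²·b²)) > −a/2, and consequently Φ((−a² + c̃·b²)/(2√(a² + c̃²·b²))) > Φ(−a/2), where Φ is the standard normal cumulative distribution function. -/
/-!
Since `c̃ > 0`, the denominator `2√(a² + c̃²b²)` is at least `2a`, so the SRM argument exceeds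
`-a²/(2√(a² + c̃²b²)) ≥ -a/2`. The standard Gaussian gives positive mass to every interval, so
its distribution function is strictly increasing.
-/

open MeasureTheory ProbabilityTheory Set

theorem strictMono_measure_Iic_of_absolutelyContinuous {μ : Measure ℝ} [IsFiniteMeasure μ]
    (hμ : volume ≪ μ) : StrictMono fun t ↦ μ (Iic t) := by
  intro s t hst
  have hIoc_pos : 0 < μ (Ioc s t) := by
    refine pos_iff_ne_zero.mpr fun h0 ↦ ?_
    have := hμ h0
    rw [Real.volume_Ioc, ENNReal.ofReal_eq_zero] at this
    linarith
  calc μ (Iic s) < μ (Iic s) + μ (Ioc s t) := ENNReal.lt_add_right (measure_ne_top _ _) hIoc_pos.ne'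
    _ = μ (Iic t) := by
      rw [← measure_union (Iic_disjoint_Ioc le_rfl) measurableSet_Ioc, Iic_union_Ioc_eq_Iic hst.le]

theorem neg_half_lt_div_of_le {a s v : ℝ} (ha : 0 < a) (hv : 0 < v) (has : a ≤ s) :
    -a / 2 < (-a ^ 2 + v) / (2 * s) := by
  have hs : 0 < s := ha.trans_le has
  rw [div_lt_div_iff₀ two_pos (by positivity)]
  nlinarith

/-- the core inequality of Theorem 2. For `a, b > 0` and `0 < π₀ < 1/4`, with
`c̃ = (1 − 4π₀)/(1 + 2π₀(1 − 2π₀)b²)`, the SRM worst-group-error argument exceeds `−a/2`, and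
therefore `Φ((−a² + c̃b²)/(2√(a² + c̃²b²))) > Φ(−a/2)` where `Φ` is the standard normal CDF
(here `Φ t = gaussianReal 0 1 {z | z ≤ t}`). -/
theorem srm_wge_gt_ds_wge
    (a b π₀ : ℝ) (ha : 0 < a) (hb : 0 < b) (hπ₀pos : 0 < π₀) (hπ₀lt : π₀ < 1/4)
    (ctilde : ℝ) (hc : ctilde = (1 - 4 * π₀) / (1 + 2 * π₀ * (1 - 2 * π₀) * b ^ 2))
    (Φ : ℝ → ENNReal) (hΦ : ∀ t, Φ t = gaussianReal 0 1 {z | z ≤ t}) :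
    -a / 2 < (-a ^ 2 + ctilde * b ^ 2) / (2 * Real.sqrt (a ^ 2 + ctilde ^ 2 * b ^ 2)) ∧
    Φ (-a / 2)
      < Φ ((-a ^ 2 + ctilde * b ^ 2) / (2 * Real.sqrt (a ^ 2 + ctilde ^ 2 * b ^ 2))) := by
  have hctilde : 0 < ctilde := by
    have hπ₀_compl : 0 < 1 - 2 * π₀ := by linarith
    have hden : 0 < 2 * π₀ * (1 - 2 * π₀) * b ^ 2 := by positivity
    rw [hc]
    exact div_pos (by linarith) (by linarith)
  have ha_le : a ≤ Real.sqrt (a ^ 2 + ctilde ^ 2 * b ^ 2) :=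
    Real.le_sqrt_of_sq_le (le_add_of_nonneg_right (by positivity))
  have hlt : -a / 2 < (-a ^ 2 + ctilde * b ^ 2) / (2 * Real.sqrt (a ^ 2 + ctilde ^ 2 * b ^ 2)) :=
    neg_half_lt_div_of_le ha (by positivity) ha_le
  refine ⟨hlt, ?_⟩
  simp only [hΦ]
  exact strictMono_measure_Iic_of_absolutelyContinuous
    (gaussianReal_absolutelyContinuous' 0 one_ne_zero) hlt
end

section
/- Let a > 0 and b > 0, and for π₀ ∈ [0, 1/4] define c̃(π₀) := (1 − 4π₀)/(1 + 2π₀(1 − 2π₀)·b²) and h(π₀) := (−a² + c̃(π₀)·b²)/(2√(a² + c̃(π₀)²·b²)). Then h is strictly decreasing on the interval [0, 1/4]; in particular h(π₀) > h(1/4) = −a/2 for every π₀ ∈ [0, 1/4). -/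
/-!
`h` is the composite of `c ↦ (-a² + c b²) / (2√(a² + c² b²))`, whose derivative
`a² b² (1 + c) / (2 (a² + c² b²)^{3/2})` is positive for `c > -1`, with `c̃`, which decreases
strictly from `1` to `-1` on `[0, 1/2]`: cross-multiplying, `c̃ x - c̃ y` has the sign of
`(y - x) (4 + 2 b² ((1 - 2x)(1 - 2y) + 4xy))`. So `h` is even strictly decreasing on `[0, 1/2]`,
and `c̃ (1/4) = 0` gives `h (1/4) = -a/2`.
-/

open Set

noncomputable def errorArg (a b c : ℝ) : ℝ :=
  (-a ^ 2 + c * b ^ 2) / (2 * Real.sqrt (a ^ 2 + c ^ 2 * b ^ 2))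

noncomputable def balancingCoeff (b p : ℝ) : ℝ :=
  (1 - 4 * p) / (1 + 2 * p * (1 - 2 * p) * b ^ 2)

lemma hasDerivAt_errorArg {a : ℝ} (ha : a ≠ 0) (b c : ℝ) :
    HasDerivAt (errorArg a b)
      (a ^ 2 * b ^ 2 * (1 + c) / (2 * (a ^ 2 + c ^ 2 * b ^ 2) * Real.sqrt (a ^ 2 + c ^ 2 * b ^ 2)))
      c := by
  have hq : 0 < a ^ 2 + c ^ 2 * b ^ 2 := by positivity
  have hs : 0 < Real.sqrt (a ^ 2 + c ^ 2 * b ^ 2) := Real.sqrt_pos.2 hq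
  have hnum : HasDerivAt (fun c => -a ^ 2 + c * b ^ 2) (b ^ 2) c := by
    simpa using ((hasDerivAt_id c).mul_const (b ^ 2)).const_add (-a ^ 2)
  have hsqrt : HasDerivAt (fun c => 2 * Real.sqrt (a ^ 2 + c ^ 2 * b ^ 2))
      (2 * ((2 * c * b ^ 2) / (2 * Real.sqrt (a ^ 2 + c ^ 2 * b ^ 2)))) c := by
    have hinner : HasDerivAt (fun c => a ^ 2 + c ^ 2 * b ^ 2) (2 * c * b ^ 2) c := by
      simpa using ((hasDerivAt_pow 2 c).mul_const (b ^ 2)).const_add (a ^ 2)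
    exact (hinner.sqrt hq.ne').const_mul 2
  refine (hnum.div hsqrt (by positivity)).congr_deriv ?_
  have hs2 := Real.sq_sqrt hq.le
  set s := Real.sqrt (a ^ 2 + c ^ 2 * b ^ 2)
  field_simp
  linear_combination b ^ 2 * c * (c * b ^ 2 - a ^ 2) * hs2

lemma errorArg_strictMonoOn {a b : ℝ} (ha : a ≠ 0) (hb : b ≠ 0) :
    StrictMonoOn (errorArg a b) (Ici (-1)) := by
  refine strictMonoOn_of_deriv_pos (convex_Ici _)
    (fun c _ => (hasDerivAt_errorArg ha b c).continuousAt.continuousWithinAt) fun c hc => ?_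
  rw [interior_Ici] at hc
  have : 0 < 1 + c := by linarith [mem_Ioi.1 hc]
  rw [(hasDerivAt_errorArg ha b c).deriv]
  positivity

lemma errorArg_zero {a : ℝ} (ha : 0 < a) (b : ℝ) : errorArg a b 0 = -a / 2 := by
  rw [errorArg, zero_pow two_ne_zero, zero_mul, add_zero, add_zero, Real.sqrt_sq ha.le]
  field_simp

lemma balancingCoeff_strictAntiOn (b : ℝ) : StrictAntiOn (balancingCoeff b) (Icc 0 (1 / 2)) := by
  intro x ⟨hx0, hx1⟩ y ⟨hy0, hy1⟩ hxy
  have hden : ∀ p ∈ Icc (0 : ℝ) (1 / 2), 0 < 1 + 2 * p * (1 - 2 * p) * b ^ 2 := by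
    intro p ⟨hp0, hp1⟩
    have : 0 ≤ 2 * p * (1 - 2 * p) * b ^ 2 := by
      have : 0 ≤ 1 - 2 * p := by linarith
      positivity
    linarith
  rw [balancingCoeff, balancingCoeff, div_lt_div_iff₀ (hden y ⟨hy0, hy1⟩) (hden x ⟨hx0, hx1⟩)]
  have cross_diff : (1 - 4 * x) * (1 + 2 * y * (1 - 2 * y) * b ^ 2)
      - (1 - 4 * y) * (1 + 2 * x * (1 - 2 * x) * b ^ 2)
      = (y - x) * (4 + 2 * b ^ 2 * ((1 - 2 * x) * (1 - 2 * y) + 4 * x * y)) := by ring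
  have : 0 < (y - x) * (4 + 2 * b ^ 2 * ((1 - 2 * x) * (1 - 2 * y) + 4 * x * y)) := by
    have : 0 ≤ 1 - 2 * x := by linarith
    have : 0 ≤ 1 - 2 * y := by linarith
    have : 0 < y - x := by linarith
    positivity
  linarith

lemma balancingCoeff_half (b : ℝ) : balancingCoeff b (1 / 2) = -1 := by
  norm_num [balancingCoeff]

lemma balancingCoeff_quarter (b : ℝ) : balancingCoeff b (1 / 4) = 0 := by
  norm_num [balancingCoeff]

lemma errorArg_comp_balancingCoeff_strictAntiOn {a b : ℝ} (ha : a ≠ 0) (hb : b ≠ 0) :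
    StrictAntiOn (errorArg a b ∘ balancingCoeff b) (Icc 0 (1 / 2)) := by
  refine (errorArg_strictMonoOn ha hb).comp_strictAntiOn (balancingCoeff_strictAntiOn b) ?_
  intro p hp
  rw [mem_Ici, ← balancingCoeff_half b]
  exact (balancingCoeff_strictAntiOn b).antitoneOn hp (right_mem_Icc.2 (by norm_num)) hp.2

/-- the Φ-argument `h(π₀)` of the SRM worst-group error, with
`c̃(π₀) = (1 − 4π₀)/(1 + 2π₀(1 − 2π₀)b²)` and
`h(π₀) = (−a² + c̃(π₀)b²)/(2√(a² + c̃(π₀)²b²))`, is strictly decreasing on `[0, 1/4]`;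
in particular `h(π₀) > h(1/4) = −a/2` for every `π₀ ∈ [0, 1/4)`. -/
theorem srm_error_argument_strictAntiOn
    (a b : ℝ) (ha : 0 < a) (hb : 0 < b)
    (ctilde h : ℝ → ℝ)
    (hc : ∀ π₀, ctilde π₀ = (1 - 4 * π₀) / (1 + 2 * π₀ * (1 - 2 * π₀) * b ^ 2))
    (hh : ∀ π₀, h π₀ = (-a ^ 2 + ctilde π₀ * b ^ 2) /
        (2 * Real.sqrt (a ^ 2 + (ctilde π₀) ^ 2 * b ^ 2))) :
    StrictAntiOn h (Set.Icc (0 : ℝ) (1/4)) ∧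
    (∀ π₀ ∈ Set.Ico (0 : ℝ) (1/4), h (1/4) < h π₀) ∧
    h (1/4) = -a / 2 := by
  have h_eq : h = errorArg a b ∘ balancingCoeff b := by
    funext p
    rw [hh, hc, Function.comp_apply, errorArg, balancingCoeff]
  have h_anti : StrictAntiOn h (Icc 0 (1 / 4)) := h_eq ▸
    (errorArg_comp_balancingCoeff_strictAntiOn ha.ne' hb.ne').mono
      (Icc_subset_Icc_right (by norm_num))
  refine ⟨h_anti, fun p hp => h_anti (Ico_subset_Icc_self hp) ⟨by norm_num, le_rfl⟩ hp.2, ?_⟩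
  rw [h_eq, Function.comp_apply, balancingCoeff_quarter, errorArg_zero ha]
end
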